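/- Let A be a saturated class of morphisms of simplicial sets with the right cancellation property for monomorphisms. Then A contains all left horn inclusions h^n_0 : Λ[n,0] → Δ[n] for n ≥ 2 if and only if A contains all left cone inclusions c_n : C_n → Δ[n] for n ≥ 2. -/

import Mathlib

/-
Filter `Δ[n]` upwards from the left cone `C_n` by attaching, one at a time and in an order
refining inclusion, the faces spanned by the sets `T ∋ 0` with `|T| ≥ 3`; a simplex enters
together with the face spanned by its vertices and `0`. When the face `T` is attached, the part
of it already present is exactly its horn `Λ[|T| - 1, 0]`, so every step is a pushout of a left
horn inclusion, and the stage just before `T = {0, …, n}` is `Λ[n, 0]`. Hence `c_n` is a finite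
composite of pushouts of left horn inclusions of dimension `≤ n`, and `C_n → Λ[n, 0]` one of
dimension `< n`. Conversely, by induction on `n` the latter lies in `A`, and right cancellation
applied to `c_n = (C_n → Λ[n, 0]) ≫ h^n_0` gives `h^n_0 ∈ A`.
-/

open CategoryTheory CategoryTheory.GrothendieckTopology CategoryTheory.Limits Simplicial SSet Opposite

noncomputable section

namespace BousfieldPaper

/-! ## Basic lifting-property classes of simplicial sets -/

/-- A Kan fibration: a map with the right lifting property against all horn inclusions. -/
def KanFibration {S T : SSet.{0}} (p : S ⟶ T) : Prop :=
  ∀ (n : ℕ) (i : Fin (n + 2)), HasLiftingProperty (Λ[n + 1, i].ι) p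

/-- An acyclic (trivial) Kan fibration: a map with the right lifting property against
all boundary inclusions. -/
def TrivialKanFibration {S T : SSet.{0}} (p : S ⟶ T) : Prop :=
  ∀ n : ℕ, HasLiftingProperty (∂Δ[n].ι) p

/-- The class of maps with the right lifting property against every map in `T`. -/
def rlpOf {C : Type*} [Category C] (T : MorphismProperty C) : MorphismProperty C :=
  fun _ _ p => ∀ ⦃A B : C⦄ (i : A ⟶ B), T i → HasLiftingProperty i p

/-- The class of maps with the left lifting property against every map in `T`. -/
def llpOf {C : Type*} [Category C] (T : MorphismProperty C) : MorphismProperty C :=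
  fun _ _ i => ∀ ⦃S T' : C⦄ (p : S ⟶ T'), T p → HasLiftingProperty i p

/-- The saturation `llp(rlp(S))` of a class of maps. -/
def saturationOf {C : Type*} [Category C] (S : MorphismProperty C) : MorphismProperty C :=
  llpOf (rlpOf S)

/-- The class of all horn inclusions (up to isomorphism of arrows). -/
def HornClass : MorphismProperty SSet.{0} := fun _ _ f =>
  ∃ (n : ℕ) (i : Fin (n + 2)), Nonempty (Arrow.mk f ≅ Arrow.mk (Λ[n + 1, i].ι))

/-- The class of left horn inclusions `Λ[n,0] → Δ[n]`, `n ≥ 2` (up to isomorphism of arrows). -/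
def LeftHornClass : MorphismProperty SSet.{0} := fun _ _ f =>
  ∃ n : ℕ, 2 ≤ n ∧ Nonempty (Arrow.mk f ≅ Arrow.mk (Λ[n, 0].ι))

/-- Anodyne maps: the saturation of the class of horn inclusions. -/
def Anodyne : MorphismProperty SSet.{0} := saturationOf HornClass

/-- A weak homotopy equivalence of simplicial sets (in the Kan--Quillen sense):
a map admitting a factorization as an anodyne map followed by an acyclic Kan fibration. -/
def WeakHomotopyEquivalence {S T : SSet.{0}} (f : S ⟶ T) : Prop :=
  ∃ (Z : SSet.{0}) (i : S ⟶ Z) (p : Z ⟶ T),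
    Anodyne i ∧ TrivialKanFibration p ∧ i ≫ p = f

/-! ## Saturated classes -/

/-- `f` is a retract of `g` in the arrow category. -/
def IsRetractOf {C : Type*} [Category C] {X Y X' Y' : C} (f : X ⟶ Y) (g : X' ⟶ Y') : Prop :=
  ∃ (i : Arrow.mk f ⟶ Arrow.mk g) (r : Arrow.mk g ⟶ Arrow.mk f), i ≫ r = 𝟙 _

/-- The inclusion functor of the subposet `{x | x < j}` of `J`. -/
def iioFunctor {J : Type} [Preorder J] (j : J) : Set.Iio j ⥤ J :=
  Monotone.functor (f := fun x => (x : J)) (fun _ _ h => h)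

/-- The cocone on the restriction of `F : J ⥤ C` to `{x | x < j}` with apex `F.obj j`. -/
def coconeBelow {J : Type} [Preorder J] {C : Type*} [Category C]
    (F : J ⥤ C) (j : J) : Cocone (iioFunctor j ⋙ F) where
  pt := F.obj j
  ι :=
    { app := fun x => F.map (homOfLE (le_of_lt x.2))
      naturality := fun x y g => by
        dsimp [iioFunctor, Monotone.functor]
        rw [← F.map_comp, Category.comp_id]
        congr 1 }

/-- A class of morphisms of simplicial sets is *saturated* (weakly saturated) if it is closed
under pushouts (cobase change), retracts and transfinite compositions. -/
structure IsSaturated (A : MorphismProperty SSet.{0}) : Prop where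
  pushout : ∀ ⦃X Y X' Y' : SSet.{0}⦄ (f : X ⟶ Y) (u : X ⟶ X') (v : Y ⟶ Y') (f' : X' ⟶ Y'),
    IsPushout f u v f' → A f → A f'
  retract : ∀ ⦃X Y X' Y' : SSet.{0}⦄ (f : X ⟶ Y) (g : X' ⟶ Y'),
    IsRetractOf f g → A g → A f
  transfinite : ∀ (J : Type) (_ : LinearOrder J) (_ : SuccOrder J) (_ : OrderBot J)
    (_ : WellFoundedLT J) (F : J ⥤ SSet.{0}) (c : Cocone F) (_ : IsColimit c),
    (∀ j : J, ¬IsMax j → A (F.map (homOfLE (Order.le_succ j)))) →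
    (∀ j : J, Order.IsSuccLimit j → Nonempty (IsColimit (coconeBelow F j))) →
    A (c.ι.app ⊥)

/-- Right cancellation property for monomorphisms. -/
def RightCancel (A : MorphismProperty SSet.{0}) : Prop :=
  ∀ ⦃X Y Z : SSet.{0}⦄ (u : X ⟶ Y) (v : Y ⟶ Z),
    Mono u → Mono v → A (u ≫ v) → A u → A v

/-- Left cancellation property for monomorphisms. -/
def LeftCancel (A : MorphismProperty SSet.{0}) : Prop :=
  ∀ ⦃X Y Z : SSet.{0}⦄ (u : X ⟶ Y) (v : Y ⟶ Z),
    Mono u → Mono v → A (u ≫ v) → A v → A u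

/-- 3-for-2 for monomorphisms: both left and right cancellation. -/
def ThreeForTwo (A : MorphismProperty SSet.{0}) : Prop :=
  RightCancel A ∧ LeftCancel A

/-! ## The left cone, the spine, and related subcomplexes of the standard simplex -/

/-- The left cone `C n ⊆ Δ[n]`: the union of the images of the initial edges `0 → i`. -/
def coneSub (n : ℕ) : Subfunctor Δ[n] where
  obj m := {α | ∃ i : ℕ, 1 ≤ i ∧ i ≤ n ∧
    ∀ j, (stdSimplex.asOrderHom α j : ℕ) = 0 ∨ (stdSimplex.asOrderHom α j : ℕ) = i}
  map := by
    rintro m m' g α ⟨i, hi1, hin, h⟩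
    exact ⟨i, hi1, hin, fun j => h _⟩

/-- The spine `Sp n ⊆ Δ[n]`: the union of the images of the edges `i → i+1`. -/
def spineSub (n : ℕ) : Subfunctor Δ[n] where
  obj m := {α | ∃ i : ℕ, i + 1 ≤ n ∧
    ∀ j, (stdSimplex.asOrderHom α j : ℕ) = i ∨ (stdSimplex.asOrderHom α j : ℕ) = i + 1}
  map := by
    rintro m m' g α ⟨i, hi, h⟩
    exact ⟨i, hi, fun j => h _⟩

/-- The union `(SpC) n ⊆ Δ[n]` of the images of the `2`-simplices `{0, i, i+1}`, `0 < i < n`. -/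
def spcSub (n : ℕ) : Subfunctor Δ[n] where
  obj m := {α | ∃ i : ℕ, 0 < i ∧ i + 1 ≤ n ∧
    ∀ j, (stdSimplex.asOrderHom α j : ℕ) = 0 ∨ (stdSimplex.asOrderHom α j : ℕ) = i ∨ (stdSimplex.asOrderHom α j : ℕ) = i + 1}
  map := by
    rintro m m' g α ⟨i, h₀, h₁, h⟩
    exact ⟨i, h₀, h₁, fun j => h _⟩

/-- The canonical inclusion `k n : C n → Λ[n, 0]` of the left cone into the left horn. -/
def coneToHorn (n : ℕ) (hn : 2 ≤ n) : ((coneSub n).toFunctor : SSet.{0}) ⟶ Λ[n, 0] where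
  app m := ↾fun α => by
    refine ⟨α.1, ?_⟩
    obtain ⟨i, hi1, hin, h⟩ := α.2
    intro hu
    rw [Set.eq_univ_iff_forall] at hu
    obtain ⟨kv, hkv0, hkvi, hkvlt⟩ : ∃ kv : ℕ, kv ≠ 0 ∧ kv ≠ i ∧ kv < n + 1 := by
      rcases eq_or_ne i 1 with hc | hc
      · exact ⟨2, by omega, by omega, by omega⟩
      · exact ⟨1, by omega, by omega, by omega⟩
    rcases hu ⟨kv, hkvlt⟩ with hr | h0
    · obtain ⟨j, hj⟩ := hr
      have hval := congrArg Fin.val hj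
      rcases h j with h' | h' <;> simp_all
    · have := congrArg Fin.val (Set.mem_singleton_iff.1 h0)
      simp_all

/-- The nerve `IΔ^n` of the free groupoid (codiscrete groupoid) on `{0, …, n}`:
its `m`-simplices are all (not necessarily monotone) functions `Fin (m+1) → Fin (n+1)`. -/
def IDelta (n : ℕ) : SSet.{0} where
  obj m := Fin (m.unop.len + 1) → Fin (n + 1)
  map f := ↾fun α => α ∘ f.unop.toOrderHom

/-- The canonical inclusion `Δ[n] → IΔ^n`. -/
def iDeltaIncl (n : ℕ) : (Δ[n] : SSet.{0}) ⟶ IDelta n where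
  app m := ↾fun α => ⇑(stdSimplex.asOrderHom α)

/-- The vertex `k : Δ[0] → IΔ^n`. -/
def iDeltaVertex (n : ℕ) (k : Fin (n + 1)) : (Δ[0] : SSet.{0}) ⟶ IDelta n where
  app m := ↾fun _ => fun _ => k


/-! ## Bisimplicial sets, the box product and the slash construction -/

/-- Bisimplicial sets: presheaves of sets on `Δ × Δ`. -/
abbrev BSSet : Type 1 := (SimplexCategory × SimplexCategory)ᵒᵖ ⥤ Type

/-- The box product `A □ B` of two simplicial sets: `(A □ B)_{n,m} = A_n × B_m`. -/
def box (A B : SSet.{0}) : BSSet where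
  obj nm := A.obj (op nm.unop.1) × B.obj (op nm.unop.2)
  map f := ↾fun p => ⟨A.map f.unop.1.op p.1, B.map f.unop.2.op p.2⟩

/-- The box product, functorially in its second variable. -/
def boxFunctor (A : SSet.{0}) : SSet.{0} ⥤ BSSet where
  obj B := box A B
  map g :=
    { app := fun nm => ↾fun p => ⟨p.1, g.app _ p.2⟩
      naturality := fun nm nm' f => by
        ext p
        exact Prod.ext rfl (NatTrans.naturality_apply g f.unop.2.op p.2 :) }

/-- The box product is natural in its first variable. -/
def boxHomLeft {A A' : SSet.{0}} (f : A ⟶ A') (B : SSet.{0}) :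
    (boxFunctor A).obj B ⟶ (boxFunctor A').obj B where
  app nm := ↾fun p => ⟨f.app _ p.1, p.2⟩
  naturality nm nm' g := by
    ext p
    exact Prod.ext (NatTrans.naturality_apply f g.unop.1.op p.1 :) rfl

lemma boxHomLeft_natural {A A' : SSet.{0}} (f : A ⟶ A') {B B' : SSet.{0}} (g : B ⟶ B') :
    (boxFunctor A).map g ≫ boxHomLeft f B' = boxHomLeft f B ≫ (boxFunctor A').map g := rfl

/-- The simplicial set `A \ X` with `m`-simplices the bisimplicial maps `A □ Δ[m] → X`. -/
def slash (A : SSet.{0}) (X : BSSet) : SSet.{0} :=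
  SSet.stdSimplex.op ⋙ ((boxFunctor A).op ⋙ yoneda.obj X)

/-- Functoriality (contravariance) of `A \ X` in `A`. -/
def slashMap {A A' : SSet.{0}} (f : A ⟶ A') (X : BSSet) : slash A' X ⟶ slash A X :=
  Functor.whiskerLeft SSet.stdSimplex.op
    (Functor.whiskerRight (NatTrans.op
      { app := fun B => boxHomLeft f B
        naturality := fun _ _ g => (boxHomLeft_natural f g).symm }) (yoneda.obj X))

lemma slashMap_id (A : SSet.{0}) (X : BSSet) : slashMap (𝟙 A) X = 𝟙 (slash A X) := rfl

lemma slashMap_comp {A A' A'' : SSet.{0}} (f : A ⟶ A') (g : A' ⟶ A'') (X : BSSet) :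
    slashMap (f ≫ g) X = slashMap g X ≫ slashMap f X := rfl


/-! ## Columns, Reedy fibrancy, Segal and Bousfield maps -/

/-- The `n`-th column `X_n := Δ[n] \ X` of a bisimplicial set. -/
def col (n : ℕ) (X : BSSet) : SSet.{0} := slash Δ[n] X

/-- The face map `d_i : X_{n+1} → X_n` between columns. -/
def colδ {n : ℕ} (i : Fin (n + 2)) (X : BSSet) : col (n + 1) X ⟶ col n X :=
  slashMap (SSet.stdSimplex.map (SimplexCategory.δ i)) X

/-- The degeneracy map `s_i : X_n → X_{n+1}` between columns. -/
def colσ {n : ℕ} (i : Fin (n + 1)) (X : BSSet) : col n X ⟶ col (n + 1) X :=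
  slashMap (SSet.stdSimplex.map (SimplexCategory.σ i)) X

/-- A bisimplicial set is `v`-fibrant (Reedy fibrant) if `f \ X` is a Kan fibration for
every monomorphism `f` of simplicial sets. -/
def VFibrant (X : BSSet) : Prop :=
  ∀ ⦃A B : SSet.{0}⦄ (f : A ⟶ B), Mono f → KanFibration (slashMap f X)

/-- The `n`-th Bousfield map `β_n = c_n \ X : X_n → C_n \ X`. -/
def bousfieldMap (n : ℕ) (X : BSSet) : col n X ⟶ slash (coneSub n).toFunctor X :=
  slashMap (coneSub n).ι X

/-- The `n`-th Segal map `ξ_n = sp_n \ X : X_n → Sp_n \ X`. -/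
def segalMap (n : ℕ) (X : BSSet) : col n X ⟶ slash (spineSub n).toFunctor X :=
  slashMap (spineSub n).ι X

/-- A Bousfield-Segal space: a `v`-fibrant bisimplicial set whose Bousfield maps `β_n`,
`n ≥ 2`, are weak homotopy equivalences. -/
def IsBSegal (X : BSSet) : Prop :=
  VFibrant X ∧ ∀ n : ℕ, 2 ≤ n → WeakHomotopyEquivalence (bousfieldMap n X)

/-- A Segal space: a `v`-fibrant bisimplicial set whose Segal maps `ξ_n`,
`n ≥ 2`, are weak homotopy equivalences. -/
def IsSegal (X : BSSet) : Prop :=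
  VFibrant X ∧ ∀ n : ℕ, 2 ≤ n → WeakHomotopyEquivalence (segalMap n X)

/-- The map `IΔ^1 \ X → X_0` induced by the vertex `{0} : Δ[0] → IΔ^1`. -/
def completenessMap (X : BSSet) : slash (IDelta 1) X ⟶ col 0 X :=
  slashMap (iDeltaVertex 1 0) X

/-- A complete Bousfield-Segal space. -/
def IsCompleteBSegal (X : BSSet) : Prop :=
  IsBSegal X ∧ WeakHomotopyEquivalence (completenessMap X)

/-- A bisimplicial set is homotopically constant if every map of the simplex category
induces a weak homotopy equivalence between the corresponding columns. -/
def HomotopicallyConstant (X : BSSet) : Prop :=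
  ∀ ⦃a b : SimplexCategory⦄ (f : a ⟶ b),
    WeakHomotopyEquivalence (slashMap (SSet.stdSimplex.map f) X)

/-! ## Vertices, edges and the fraction operation -/

/-- The vertices of a simplicial set. -/
def vert (S : SSet.{0}) : Type := S.obj (op (SimplexCategory.mk 0))

/-- Two vertices of a simplicial set lie in the same connected component, i.e. they have
equal classes in `π₀`. -/
def hSim (S : SSet.{0}) (a b : vert S) : Prop :=
  Relation.EqvGen (fun v w : vert S => ∃ e : S.obj (op (SimplexCategory.mk 1)),
    SimplicialObject.δ S 1 e = v ∧ SimplicialObject.δ S 0 e = w) a b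

/-- The edge `0 → i` of the left cone `C n`. -/
def coneEdge (n : ℕ) (i : Fin (n + 1)) (hi : i ≠ 0) :
    (Δ[1] : SSet.{0}) ⟶ (coneSub n).toFunctor where
  app m := ↾fun β => by
    refine ⟨(SSet.stdSimplex.map (SimplexCategory.mkOfLe 0 i (Fin.zero_le i))).app m β, ?_⟩
    have hne : (i : ℕ) ≠ 0 := fun h => hi (by apply Fin.ext; simpa using h)
    refine ⟨(i : ℕ), by omega, i.is_le, fun j => ?_⟩
    have key : ∀ k : Fin 2,
        (((SimplexCategory.mkOfLe (0 : Fin (n + 1)) i (Fin.zero_le i)).toOrderHom k : Fin (n+1)) : ℕ) = 0 ∨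
        (((SimplexCategory.mkOfLe (0 : Fin (n + 1)) i (Fin.zero_le i)).toOrderHom k : Fin (n+1)) : ℕ) = i := by
      intro k
      match k with
      | 0 => left; rfl
      | 1 => right; rfl
    exact key _
  naturality m m' g := by
    ext β
    apply Subtype.ext
    exact NatTrans.naturality_apply (SSet.stdSimplex.map
      (SimplexCategory.mkOfLe 0 i (Fin.zero_le i))) g β

variable (X : BSSet)

/-- Vertex component of the restriction along the edge `0 → 2` of `C₂` (the "numerator"). -/
def eF (w : vert (slash (coneSub 2).toFunctor X)) : vert (col 1 X) :=
  (slashMap (coneEdge 2 2 (by decide)) X).app _ w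

/-- Vertex component of the restriction along the edge `0 → 1` of `C₂` (the "denominator"). -/
def eG (w : vert (slash (coneSub 2).toFunctor X)) : vert (col 1 X) :=
  (slashMap (coneEdge 2 1 (by decide)) X).app _ w

/-- Vertex component of the face map `d_i : X_1 → X_0`. -/
def dV (i : Fin 2) (f : vert (col 1 X)) : vert (col 0 X) := (colδ i X).app _ f

/-- Vertex component of the degeneracy `s_0 : X_0 → X_1`; `oneV X x` is `1_x`. -/
def oneV (x : vert (col 0 X)) : vert (col 1 X) := (colσ 0 X).app _ x

/-- The fraction operation determined by a section `μ₂` of the Bousfield map `β₂`: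
`f/g := d₀ (μ₂ (f, g))`. -/
def fracV (μ₂ : slash (coneSub 2).toFunctor X ⟶ col 2 X)
    (w : vert (slash (coneSub 2).toFunctor X)) : vert (col 1 X) :=
  (colδ 0 X).app _ (μ₂.app _ w)

lemma dV_oneV (x : vert (col 0 X)) (i : Fin 2) : dV X i (oneV X x) = x := by
  have h : colσ (0 : Fin 1) X ≫ colδ i X = 𝟙 (col 0 X) := by
    erw [colδ, colσ, ← slashMap_comp, ← Functor.map_comp]
    have : SimplexCategory.δ i ≫ SimplexCategory.σ (0 : Fin 1) = 𝟙 (SimplexCategory.mk 0) := by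
      fin_cases i
      · exact SimplexCategory.δ_comp_σ_self
      · exact SimplexCategory.δ_comp_σ_succ
    erw [this, CategoryTheory.Functor.map_id, slashMap_id]; rfl
  exact congrArg (fun (t : col 0 X ⟶ col 0 X) => t.app (op (SimplexCategory.mk 0)) x)
    h

/-- The identity morphism `1_x` as an element of the hom-space `X₁(x,x)`. -/
def idHom (x : vert (col 0 X)) :
    {f : vert (col 1 X) // dV X 1 f = x ∧ dV X 0 f = x} :=
  ⟨oneV X x, dV_oneV X x 1, dV_oneV X x 0⟩


/-! ## Cellularity, pushouts of coproducts, finite compositions of pushouts -/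

/-- `f` is a pushout (cobase change) of `g`. -/
def IsPushoutOf {C : Type*} [Category C] {A B X Y : C} (g : A ⟶ B) (f : X ⟶ Y) : Prop :=
  ∃ (u : A ⟶ X) (v : B ⟶ Y), IsPushout g u v f

/-- `f` is a pushout of a coproduct of maps belonging to the class `S`. -/
def IsPushoutOfCoproductOf (S : MorphismProperty SSet.{0}) {P Q : SSet.{0}} (f : P ⟶ Q) : Prop :=
  ∃ (ι : Type) (A B : ι → SSet.{0}) (g : ∀ i, A i ⟶ B i),
    (∀ i, S (g i)) ∧
      IsPushoutOf (Limits.Sigma.desc (fun i => g i ≫ Limits.Sigma.ι B i) : (∐ A) ⟶ (∐ B)) f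

/-- `f` is cellular with respect to the class `S`: it is a (transfinite, here `ℕ`-indexed)
composition of pushouts of coproducts of maps of `S`. -/
def IsCellularIn (S : MorphismProperty SSet.{0}) {X Y : SSet.{0}} (f : X ⟶ Y) : Prop :=
  ∃ (F : ℕ ⥤ SSet.{0}) (c : Cocone F) (_ : IsColimit c) (e₀ : F.obj 0 ≅ X) (e : c.pt ≅ Y),
    (∀ m : ℕ, IsPushoutOfCoproductOf S (F.map (homOfLE (Nat.le_succ m)))) ∧
      f = e₀.inv ≫ c.ι.app 0 ≫ e.hom

/-- `f` is a finite composition of pushouts of `g`. -/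
inductive FinCompPushoutsOf {A B : SSet.{0}} (g : A ⟶ B) : ∀ {X Y : SSet.{0}}, (X ⟶ Y) → Prop where
  | of {X Y : SSet.{0}} (f : X ⟶ Y) : IsPushoutOf g f → FinCompPushoutsOf g f
| comp {X Y Z : SSet.{0}} (f₁ : X ⟶ Y) (f₂ : Y ⟶ Z) :
      IsPushoutOf g f₁ → FinCompPushoutsOf g f₂ → FinCompPushoutsOf g (f₁ ≫ f₂)

/-! ## Lattice operations on subpresheaves -/

variable {C : Type*} [Category C]

/-- Intersection of two subpresheaves. -/
def subInf {F : Cᵒᵖ ⥤ Type} (G G' : Subfunctor F) : Subfunctor F where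
  obj U := G.obj U ∩ G'.obj U
  map i := fun _ hx => ⟨G.map i hx.1, G'.map i hx.2⟩

/-- Union of two subpresheaves. -/
def subSup {F : Cᵒᵖ ⥤ Type} (G G' : Subfunctor F) : Subfunctor F where
  obj U := G.obj U ∪ G'.obj U
  map i := by
    rintro x (hx | hx)
    · exact Or.inl (G.map i hx)
    · exact Or.inr (G'.map i hx)

lemma subInf_le_left {F : Cᵒᵖ ⥤ Type} (G G' : Subfunctor F) : subInf G G' ≤ G :=
  fun _ => Set.inter_subset_left

lemma le_subSup_left {F : Cᵒᵖ ⥤ Type} (G G' : Subfunctor F) : G ≤ subSup G G' :=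
  fun _ => Set.subset_union_left

/-! ## The coface `d¹` and the left cone -/

/-- The coface map `d¹ : Δ[n] → Δ[n+1]`. -/
def d1Map (n : ℕ) : (Δ[n] : SSet.{0}) ⟶ Δ[n + 1] :=
  SSet.stdSimplex.map (SimplexCategory.δ 1)

/-- The restriction of `d¹` to a map `C n → C (n+1) ∩ d¹[Δ[n]]`. -/
def coneToInter (n : ℕ) : ((coneSub n).toFunctor : SSet.{0}) ⟶
    (subInf (coneSub (n + 1)) (Subfunctor.range (d1Map n))).toFunctor where
  app m := ↾fun α => by
    refine ⟨(d1Map n).app m α.1, ?_, ⟨α.1, rfl⟩⟩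
    obtain ⟨i, hi1, hin, h⟩ := α.2
    refine ⟨i + 1, by omega, by omega, fun j => ?_⟩
    have key : stdSimplex.asOrderHom ((d1Map n).app m α.1) j
        = (1 : Fin (n + 2)).succAbove (stdSimplex.asOrderHom α.1 j) := rfl
    rcases h j with h' | h'
    · left
      have h0 : stdSimplex.asOrderHom α.1 j = 0 := by
        apply Fin.ext; exact h'
      rw [key, h0, Fin.succAbove_of_castSucc_lt]
      · simp
      · simp
    · right
      rw [key, Fin.succAbove_of_le_castSucc]
      · simp [Fin.val_succ, h']
      · rw [Fin.le_def]
        simpa using by omega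
  naturality m m' g := by
    ext α
    apply Subtype.ext
    exact NatTrans.naturality_apply (d1Map n) g α.1

/-! ## Horizontally constant bisimplicial sets and closure properties -/

/-- `p₁* A`: the horizontally constant bisimplicial set with `(p₁* A)_{n,m} = A_n`. -/
def pHorizontal (A : SSet.{0}) : BSSet where
  obj nm := A.obj (op nm.unop.1)
  map f := A.map f.unop.1.op

/-- A class of maps of bisimplicial sets is stable under pullbacks. -/
def StableUnderPullbacksB (F : MorphismProperty BSSet) : Prop :=
  ∀ ⦃W X Y Z : BSSet⦄ (p' : W ⟶ X) (f' : W ⟶ Z) (f : X ⟶ Y) (p : Z ⟶ Y),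
    IsPullback p' f' f p → F f → F f'

/-- A class of maps of bisimplicial sets is stable under retracts. -/
def StableUnderRetractsB (F : MorphismProperty BSSet) : Prop :=
  ∀ ⦃X Y X' Y' : BSSet⦄ (f : X ⟶ Y) (g : X' ⟶ Y'), IsRetractOf f g → F g → F f

/-- A class of maps of bisimplicial sets is closed under sequential (inverse) limits:
limits of towers of arrows belonging to the class again belong to the class. -/
def ClosedUnderSequentialLimitsB (F : MorphismProperty BSSet) : Prop :=
  ∀ (G : ℕᵒᵖ ⥤ Arrow BSSet), (∀ n : ℕᵒᵖ, F (G.obj n).hom) →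
    ∀ (c : Cone G), IsLimit c → F c.pt.hom

namespace IsSaturated

variable {A : MorphismProperty SSet.{0}}

lemma of_arrowIso (hA : IsSaturated A) {W X Y Z : SSet.{0}} {f : W ⟶ X} {g : Y ⟶ Z}
    (e : Arrow.mk f ≅ Arrow.mk g) (hg : A g) : A f :=
  hA.retract f g ⟨e.hom, e.inv, e.hom_inv_id⟩ hg

lemma id_mem (hA : IsSaturated A) (X : SSet.{0}) : A (𝟙 X) :=
  hA.transfinite (Fin 1) inferInstance inferInstance inferInstance inferInstance
    ((Functor.const (Fin 1)).obj X) _ (colimitOfDiagramTerminal isTerminalTop _)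
    (fun j hj => (hj fun b _ => (Subsingleton.elim b j).le).elim)
    (fun _ hj => (Order.not_isSuccLimit_of_isSuccArchimedean hj).elim)

lemma of_isIso (hA : IsSaturated A) {X Y : SSet.{0}} (f : X ⟶ Y) [IsIso f] : A f :=
  hA.of_arrowIso (Arrow.isoMk (Iso.refl X) (asIso f).symm) (hA.id_mem X)

lemma comp_mem (hA : IsSaturated A) {X Y Z : SSet.{0}} {f : X ⟶ Y} {g : Y ⟶ Z}
    (hf : A f) (hg : A g) : A (f ≫ g) := by
  refine hA.transfinite (Fin 3) inferInstance inferInstance inferInstance inferInstance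
    (ComposableArrows.mk₂ f g) _ (colimitOfDiagramTerminal isTerminalTop _) ?_
    (fun _ hj => (Order.not_isSuccLimit_of_isSuccArchimedean hj).elim)
  intro j hj
  fin_cases j
  · exact hf
  · exact hg
  · exact (hj fun b _ => Fin.le_last b).elim

lemma homOfLE_mem_of_monotone (hA : IsSaturated A) {X : SSet.{0}} {F : ℕ → X.Subcomplex}
    (hF : Monotone F) {N : ℕ} (hstep : ∀ t < N, A (Subcomplex.homOfLE (hF t.le_succ))) :
    A (Subcomplex.homOfLE (hF N.zero_le)) := by
  induction N with
  | zero => exact hA.id_mem _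
  | succ N ih =>
    exact hA.comp_mem (ih fun t ht => hstep t (ht.trans N.lt_succ_self)) (hstep N N.lt_succ_self)

end IsSaturated

universe u

open SSet.Subcomplex in
lemma isPushout_of_preimage_eq {Y Z : SSet.{u}} {f : Y ⟶ Z} [Mono f] {S : Y.Subcomplex}
    {B B' : Z.Subcomplex} (hS : B.preimage f = S) (hB' : B ⊔ range f = B') (hBB' : B ≤ B')
    {l : S.toSSet ⟶ B.toSSet} {r : Y ⟶ B'.toSSet} (hl : l ≫ B.ι = S.ι ≫ f)
    (hr : r ≫ B'.ι = f) :
    IsPushout S.ι l r (homOfLE hBB') := by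
  have w : S.ι ≫ r = l ≫ homOfLE hBB' := by
    rw [← cancel_mono B'.ι, Category.assoc, hr, Category.assoc, homOfLE_ι, hl]
  have : Mono r := mono_of_mono_fac hr
  refine ⟨⟨w⟩, ⟨evaluationJointlyReflectsColimits _ fun m => ?_⟩⟩
  have hl' (x) : (l.app m x).1 = f.app m x.1 := by
    simpa using ConcreteCategory.congr_hom (congr_app hl m) x
  have hr' (y) : (r.app m y).1 = f.app m y := by
    simpa using ConcreteCategory.congr_hom (congr_app hr m) y
  refine (isColimitMapCoconePushoutCoconeEquiv _ w).symm (IsPushout.isColimit ?_)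
  refine Types.isPushout_of_isPullback_of_mono'
    ((Types.isPullback_iff _ _ _ _).2 ⟨?_, ?_, ?_⟩) ?_ ?_
  · simp only [← Functor.map_comp, w]
  · exact fun x y h => Subtype.ext h.1
  · intro y x h
    have hy : f.app m y = x.1 := (hr' y).symm.trans (congrArg Subtype.val h)
    have hyS : y ∈ S.obj m := by
      rw [← hS, Subcomplex.preimage_obj, Set.mem_preimage, hy]
      exact x.2
    exact ⟨⟨y, hyS⟩, rfl, Subtype.ext ((hl' _).trans hy)⟩
  · ext x
    have hx : x.1 ∈ (B ⊔ range f).obj m := hB' ▸ x.2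
    simp only [Set.mem_univ, iff_true]
    rcases hx with hx | ⟨y, hy⟩
    · exact Or.inr ⟨⟨x.1, hx⟩, rfl⟩
    · exact Or.inl ⟨y, Subtype.ext ((hr' y).trans hy)⟩
  · intro x y _ _ h
    exact Subtype.ext (congrArg Subtype.val h :)

section FinsetCode

variable {α : Type*} [Fintype α]

/-- The order in which faces are attached; it refines inclusion, so every face comes after its
proper faces. -/
def finsetCode (S : Finset α) : ℕ :=
  S.card * Fintype.card (Finset α) + Fintype.equivFin (Finset α) S

lemma finsetCode_lt_of_card_lt {S T : Finset α} (h : S.card < T.card) :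
    finsetCode S < finsetCode T := by
  have hS := (Fintype.equivFin (Finset α) S).isLt
  have hle := Nat.mul_le_mul_right (Fintype.card (Finset α)) (Nat.succ_le_of_lt h)
  rw [Nat.succ_mul] at hle
  unfold finsetCode
  omega

lemma finsetCode_strictMono : StrictMono (finsetCode : Finset α → ℕ) :=
  fun _ _ h => finsetCode_lt_of_card_lt (Finset.card_lt_card h)

lemma finsetCode_injective : Function.Injective (finsetCode : Finset α → ℕ) := by
  intro S T h
  have hcard : S.card = T.card := by
    by_contra hne
    rcases Nat.lt_or_gt_of_ne hne with hlt | hlt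
    · exact (finsetCode_lt_of_card_lt hlt).ne h
    · exact (finsetCode_lt_of_card_lt hlt).ne' h
  unfold finsetCode at h
  rw [hcard, Nat.add_left_cancel_iff] at h
  exact (Fintype.equivFin (Finset α)).injective (Fin.ext h)

end FinsetCode

section ConeFiltration

variable {n : ℕ} {m : SimplexCategoryᵒᵖ}

def verticesWithZero (α : (Δ[n] : SSet.{0}).obj m) : Finset (Fin (n + 1)) :=
  insert 0 (Finset.univ.image (stdSimplex.asOrderHom α))

lemma zero_mem_verticesWithZero (α : (Δ[n] : SSet.{0}).obj m) : 0 ∈ verticesWithZero α :=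
  Finset.mem_insert_self _ _

lemma apply_mem_verticesWithZero (α : (Δ[n] : SSet.{0}).obj m) (j) :
    stdSimplex.asOrderHom α j ∈ verticesWithZero α :=
  Finset.mem_insert_of_mem (Finset.mem_image_of_mem _ (Finset.mem_univ j))

lemma verticesWithZero_map_subset {m' : SimplexCategoryᵒᵖ} (g : m ⟶ m')
    (α : (Δ[n] : SSet.{0}).obj m) :
    verticesWithZero ((Δ[n] : SSet.{0}).map g α) ⊆ verticesWithZero α := by
  refine Finset.insert_subset (zero_mem_verticesWithZero α) fun v hv => ?_
  obtain ⟨j, -, rfl⟩ := Finset.mem_image.1 hv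
  exact apply_mem_verticesWithZero α _

lemma mem_horn_zero_iff (α : (Δ[n] : SSet.{0}).obj m) :
    α ∈ Λ[n, 0].obj m ↔ verticesWithZero α ≠ Finset.univ := by
  rw [mem_horn_iff, Ne, Ne, ← Finset.coe_eq_univ, verticesWithZero, Finset.coe_insert,
    Finset.coe_image, Finset.coe_univ, Set.image_univ, Set.insert_eq, Set.union_comm]

lemma mem_face_iff_verticesWithZero_subset {T : Finset (Fin (n + 1))} (h0 : 0 ∈ T)
    (α : (Δ[n] : SSet.{0}).obj m) :
    α ∈ (stdSimplex.face T).obj m ↔ verticesWithZero α ⊆ T := by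
  rw [verticesWithZero, Finset.insert_subset_iff, and_iff_right h0]
  rfl

lemma mem_coneSub_iff (hn : 1 ≤ n) (α : (Δ[n] : SSet.{0}).obj m) :
    α ∈ (coneSub n).obj m ↔ (verticesWithZero α).card ≤ 2 := by
  constructor
  · rintro ⟨i, -, hin, h⟩
    have hsub : verticesWithZero α ⊆ {0, ⟨i, by omega⟩} := by
      refine Finset.insert_subset (by simp) fun v hv => ?_
      obtain ⟨j, -, rfl⟩ := Finset.mem_image.1 hv
      rcases h j with h' | h' <;> simp [Fin.ext_iff, h']
    exact (Finset.card_le_card hsub).trans Finset.card_le_two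
  · intro h
    by_cases hz : ∀ j, stdSimplex.asOrderHom α j = 0
    · exact ⟨1, le_rfl, hn, fun j => Or.inl (by simp [hz j])⟩
    obtain ⟨j₀, hj₀⟩ := not_forall.1 hz
    refine ⟨stdSimplex.asOrderHom α j₀, Nat.pos_of_ne_zero fun h => hj₀ (Fin.ext h),
      by omega, fun j => ?_⟩
    by_contra hj
    simp only [Fin.val_eq_zero_iff, Fin.val_inj, not_or] at hj
    exact h.not_gt (Finset.two_lt_card_iff.2 ⟨0, _, _, zero_mem_verticesWithZero α,
      apply_mem_verticesWithZero α j₀, apply_mem_verticesWithZero α j, Ne.symm hj₀,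
      Ne.symm hj.1, Ne.symm hj.2⟩)

/-- A simplex `α` lies in stage `t` once the face spanned by its vertices and `0` has been
attached; the faces with at most two vertices make up the cone. -/
def coneFiltration (n t : ℕ) : (Δ[n] : SSet.{0}).Subcomplex where
  obj _ := {α | (verticesWithZero α).card ≤ 2 ∨ finsetCode (verticesWithZero α) < t}
  map g α := Or.imp (le_trans (Finset.card_le_card (verticesWithZero_map_subset g α)))
    (lt_of_le_of_lt (finsetCode_strictMono.monotone (verticesWithZero_map_subset g α)))

lemma coneFiltration_monotone (n : ℕ) : Monotone (coneFiltration n) :=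
  fun _ _ h _ _ => Or.imp_right fun h' => h'.trans_le h

lemma coneFiltration_zero (hn : 1 ≤ n) : coneFiltration n 0 = coneSub n := by
  ext m α
  simp [coneFiltration, mem_coneSub_iff hn]

lemma mem_coneFiltration_finsetCode_iff {T : Finset (Fin (n + 1))} (h3 : 3 ≤ T.card)
    {α : (Δ[n] : SSet.{0}).obj m} (hα : verticesWithZero α ⊆ T) :
    α ∈ (coneFiltration n (finsetCode T)).obj m ↔ verticesWithZero α ≠ T := by
  constructor
  · rintro (h | h) rfl
    · omega
    · exact h.false
  · intro h
    exact Or.inr (finsetCode_strictMono (Finset.ssubset_iff_subset_ne.2 ⟨hα, h⟩))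

lemma coneFiltration_finsetCode_univ (hn : 2 ≤ n) :
    coneFiltration n (finsetCode (Finset.univ : Finset (Fin (n + 1)))) = Λ[n, 0] := by
  ext m α
  rw [mem_coneFiltration_finsetCode_iff (by simpa using hn) (Finset.subset_univ _),
    mem_horn_zero_iff]

lemma coneFiltration_finsetCode_univ_succ :
    coneFiltration n (finsetCode (Finset.univ : Finset (Fin (n + 1))) + 1) = ⊤ := by
  ext m α
  simp only [Subfunctor.top_obj, Set.top_eq_univ, Set.mem_univ, iff_true]
  exact Or.inr (Nat.lt_succ_of_le (finsetCode_strictMono.monotone (Finset.subset_univ _)))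

lemma coneFiltration_succ_finsetCode {T : Finset (Fin (n + 1))} (h0 : 0 ∈ T) :
    coneFiltration n (finsetCode T + 1) =
      coneFiltration n (finsetCode T) ⊔ stdSimplex.face T := by
  ext m α
  simp only [Subfunctor.max_obj, Set.mem_union, mem_face_iff_verticesWithZero_subset h0]
  constructor
  · rintro (h | h)
    · exact Or.inl (Or.inl h)
    rcases Nat.lt_succ_iff_lt_or_eq.1 h with h | h
    · exact Or.inl (Or.inr h)
    · exact Or.inr (finsetCode_injective h).le
  · rintro ((h | h) | h)
    · exact Or.inl h
    · exact Or.inr (h.trans (Nat.lt_succ_self _))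
    · exact Or.inr (Nat.lt_succ_of_le (finsetCode_strictMono.monotone h))

lemma coneFiltration_succ_of_forall_ne {t : ℕ}
    (h : ∀ T : Finset (Fin (n + 1)), 0 ∈ T → 3 ≤ T.card → finsetCode T ≠ t) :
    coneFiltration n (t + 1) = coneFiltration n t := by
  refine le_antisymm (fun m α hα => ?_) (coneFiltration_monotone n t.le_succ)
  rcases hα with hα | hα
  · exact Or.inl hα
  rcases Nat.lt_succ_iff_lt_or_eq.1 hα with hα | hα
  · exact Or.inr hα
  · by_contra hc
    exact h _ (zero_mem_verticesWithZero α) (by simp [coneFiltration] at hc; omega) hα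

lemma coneSub_le_horn (hn : 2 ≤ n) : coneSub n ≤ horn.{0} n 0 := by
  rw [← coneFiltration_zero (by omega), ← coneFiltration_finsetCode_univ hn]
  exact coneFiltration_monotone n (Nat.zero_le _)

end ConeFiltration

section Face

variable {n k : ℕ} (T : Finset (Fin (n + 1))) (hk : T.card = k + 1)

def faceInclusion : (Δ[k] : SSet.{0}) ⟶ Δ[n] :=
  (stdSimplex.isoOfRepresentableBy
    (stdSimplex.faceRepresentableBy T k (T.orderIsoOfFin hk))).hom ≫ (stdSimplex.face T).ι

instance : Mono (faceInclusion T hk) := by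
  unfold faceInclusion
  infer_instance

lemma range_faceInclusion : Subcomplex.range (faceInclusion T hk) = stdSimplex.face T := by
  rw [faceInclusion, Subcomplex.range_comp, Subcomplex.range_eq_top, Subcomplex.image_top]
  exact Subfunctor.range_ι _

variable {T}

lemma verticesWithZero_faceInclusion_app (h0 : 0 ∈ T) {m : SimplexCategoryᵒᵖ}
    (β : (Δ[k] : SSet.{0}).obj m) :
    verticesWithZero ((faceInclusion T hk).app m β) =
      (verticesWithZero β).map (T.orderEmbOfFin hk).toEmbedding := by
  have hzero : T.orderEmbOfFin hk 0 = 0 :=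
    (Finset.orderEmbOfFin_zero hk k.succ_pos).trans
      (le_antisymm (T.min'_le 0 h0) (Fin.zero_le _))
  rw [verticesWithZero, verticesWithZero, Finset.map_insert, Finset.map_eq_image,
    Finset.image_image, RelEmbedding.coe_toEmbedding, hzero]
  rfl

lemma preimage_coneFiltration_faceInclusion (h0 : 0 ∈ T) (h3 : 3 ≤ T.card) :
    (coneFiltration n (finsetCode T)).preimage (faceInclusion T hk) = Λ[k, 0] := by
  ext m β
  have hsub : verticesWithZero ((faceInclusion T hk).app m β) ⊆ T := by
    rw [verticesWithZero_faceInclusion_app hk h0]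
    exact (Finset.map_subset_map.2 (Finset.subset_univ _)).trans
      (Finset.map_orderEmbOfFin_univ T hk).le
  rw [Subcomplex.preimage_obj, Set.mem_preimage, mem_coneFiltration_finsetCode_iff h3 hsub,
    mem_horn_zero_iff, verticesWithZero_faceInclusion_app hk h0, Ne, Ne,
    ← Finset.map_inj (f := (T.orderEmbOfFin hk).toEmbedding), Finset.map_orderEmbOfFin_univ]

end Face

namespace IsSaturated

variable {A : MorphismProperty SSet.{0}}

lemma homOfLE_coneFiltration_succ_mem (hA : IsSaturated A) {n t : ℕ}
    (hhorn : ∀ T : Finset (Fin (n + 1)), 0 ∈ T → 3 ≤ T.card → finsetCode T = t →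
      A Λ[T.card - 1, 0].ι) :
    A (Subcomplex.homOfLE (coneFiltration_monotone n t.le_succ)) := by
  by_cases hT : ∃ T : Finset (Fin (n + 1)), 0 ∈ T ∧ 3 ≤ T.card ∧ finsetCode T = t
  · obtain ⟨T, h0, h3, rfl⟩ := hT
    obtain ⟨k, hk⟩ : ∃ k, T.card = k + 1 := ⟨T.card - 1, by omega⟩
    have hS := preimage_coneFiltration_faceInclusion hk h0 h3
    have hB' : coneFiltration n (finsetCode T) ⊔ Subcomplex.range (faceInclusion T hk) =
        coneFiltration n (finsetCode T + 1) := by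
      rw [range_faceInclusion, coneFiltration_succ_finsetCode h0]
    have hhornT := hhorn T h0 h3 rfl
    rw [hk, Nat.add_sub_cancel] at hhornT
    refine hA.pushout _ _ _ _ (isPushout_of_preimage_eq hS hB' _
      (l := Subcomplex.lift (Λ[k, 0].ι ≫ faceInclusion T hk) ?_)
      (r := Subcomplex.lift _ (hB' ▸ le_sup_right)) rfl rfl) hhornT
    rw [← Subcomplex.image_eq_range, Subcomplex.image_le_iff, hS]
  · have heq := coneFiltration_succ_of_forall_ne fun T h0 h3 hT' => hT ⟨T, h0, h3, hT'⟩
    exact hA.of_isIso (Subcomplex.eqToIso heq.symm).hom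

lemma homOfLE_coneFiltration_mem (hA : IsSaturated A) {n N : ℕ}
    (hhorn : ∀ T : Finset (Fin (n + 1)), 0 ∈ T → 3 ≤ T.card → finsetCode T < N →
      A Λ[T.card - 1, 0].ι) :
    A (Subcomplex.homOfLE (coneFiltration_monotone n N.zero_le)) :=
  hA.homOfLE_mem_of_monotone _ fun _ ht =>
    hA.homOfLE_coneFiltration_succ_mem fun T h0 h3 hT => hhorn T h0 h3 (hT ▸ ht)

lemma coneSub_ι_mem (hA : IsSaturated A) {n : ℕ} (hn : 2 ≤ n)
    (hhorn : ∀ k, 2 ≤ k → k ≤ n → A Λ[k, 0].ι) : A (coneSub n).ι := by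
  rw [← Subfunctor.homOfLe_ι (le_top : coneSub n ≤ ⊤)]
  refine hA.comp_mem ?_ (hA.of_isIso _)
  have hcard (T : Finset (Fin (n + 1))) : T.card ≤ n + 1 := by simpa using T.card_le_univ
  convert hA.homOfLE_coneFiltration_mem
      (N := finsetCode (Finset.univ : Finset (Fin (n + 1))) + 1)
      (fun T _ h3 _ => hhorn _ (by omega) (by have := hcard T; omega)) using 2 <;>
    simp only [coneFiltration_zero (by omega : 1 ≤ n), coneFiltration_finsetCode_univ_succ]

lemma homOfLE_coneSub_le_horn_mem (hA : IsSaturated A) {n : ℕ} (hn : 2 ≤ n)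
    (hhorn : ∀ k, 2 ≤ k → k < n → A Λ[k, 0].ι) :
    A (Subcomplex.homOfLE (coneSub_le_horn hn)) := by
  have hhorn' (T : Finset (Fin (n + 1))) (_ : 0 ∈ T) (h3 : 3 ≤ T.card)
      (hT : finsetCode T < finsetCode (Finset.univ : Finset (Fin (n + 1)))) :
      A Λ[T.card - 1, 0].ι := by
    have hcard : T.card < n + 1 := by
      simpa using (Finset.card_lt_iff_ne_univ T).2 (ne_of_apply_ne finsetCode hT.ne)
    exact hhorn _ (by omega) (by omega)
  convert hA.homOfLE_coneFiltration_mem hhorn' using 2 <;>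
    simp only [coneFiltration_zero (by omega : 1 ≤ n), coneFiltration_finsetCode_univ hn]

end IsSaturated

/-- Let `A` be a saturated class of morphisms of simplicial sets with the right
cancellation property for monomorphisms. Then `A` contains all left horn inclusions
`h^n_0 : Λ[n,0] → Δ[n]`, `n ≥ 2`, if and only if `A` contains all left cone inclusions
`c_n : C_n → Δ[n]`, `n ≥ 2`. -/
theorem leftHorns_iff_leftCones (A : MorphismProperty SSet.{0})
    (hA : IsSaturated A) (hrc : RightCancel A) :
    (∀ n : ℕ, 2 ≤ n → A (Λ[n, 0].ι)) ↔ (∀ n : ℕ, 2 ≤ n → A ((coneSub n).ι)) := by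
  constructor
  · exact fun hhorn n hn => hA.coneSub_ι_mem hn fun k hk _ => hhorn k hk
  · intro hcone n hn
    induction n using Nat.strong_induction_on with
    | _ n ih =>
    exact hrc _ _ inferInstance inferInstance
      (by rw [Subfunctor.homOfLe_ι]; exact hcone n hn)
      (hA.homOfLE_coneSub_le_horn_mem hn fun k hk hkn => ih k hkn hk)

end BousfieldPaper
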